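/- Let N be a v×v 0-1 matrix with all row and column sums k satisfying NNᵀN = βN + α(J − N). Let Γ' be the directed graph on the antiflags {(p,B) : N_{pB} = 0} with (p,B) → (q,C) iff N_{pC} = 1. Then Γ' is a directed strongly regular graph with parameters (v(v−k), k(v−k), k²−α, k²−β, k²−α). -/

import Mathlib

/-!
For a matrix `X` indexed by points and blocks, let `L X` be the matrix on antiflags with entry
`X p C` at `((p, B), (q, C))`. The adjacency matrix is `L N` and the all-ones matrix is `L J`, and
since the intermediate antiflags `(r, D)` of a product are exactly the pairs with `N r D = 0`,
`L X * L Y = L (X (J - Nᵀ) Y)`. The three equations therefore reduce to identities for `N`: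
`N (J - Nᵀ) J = J (J - Nᵀ) N = k (v - k) J` by the row and column sums, and
`N (J - Nᵀ) N = k² J - N Nᵀ N = (k² - α) J + (α - β) N` by the design equation.
-/

open Matrix

section ZeroOne

variable {R : Type*} [Ring R] [DecidableEq R] {a : R}

theorem ite_eq_one_eq_self (h : a = 0 ∨ a = 1) : (if a = 1 then (1 : R) else 0) = a := by
  rcases h with rfl | rfl <;> split_ifs <;> simp_all

theorem ite_eq_zero_eq_one_sub (h : a = 0 ∨ a = 1) : (if a = 0 then (1 : R) else 0) = 1 - a := by
  rcases h with rfl | rfl <;> split_ifs <;> simp_all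

end ZeroOne

namespace Matrix

section Ones

variable {l m n R : Type*} [Fintype m] [CommSemiring R]

theorem ones_mul_ones :
    (of fun _ _ => 1 : Matrix l m R) * (of fun _ _ => 1 : Matrix m n R) =
      (Fintype.card m : R) • of fun _ _ => 1 := by
  ext
  simp [mul_apply]

theorem transpose_mul_ones {N : Matrix m m R} {k : R}
    (hcol : of (fun _ _ => 1) * N = k • of fun _ _ => 1) :
    Nᵀ * of (fun _ _ => 1) = k • of fun _ _ => 1 :=
  (transpose_mul _ _).symm.trans ((congrArg transpose hcol).trans (transpose_smul _ _))

theorem ones_mul_transpose {N : Matrix m m R} {k : R}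
    (hrow : N * of (fun _ _ => 1) = k • of fun _ _ => 1) :
    of (fun _ _ => 1) * Nᵀ = k • of fun _ _ => 1 :=
  (transpose_mul _ _).symm.trans ((congrArg transpose hrow).trans (transpose_smul _ _))

end Ones

section PartialGeometricDesign

variable {n R : Type*} [Fintype n] [CommRing R] {N : Matrix n n R} {k α β : R}

theorem mul_compl_transpose_mul_ones (hrow : N * of (fun _ _ => 1) = k • of fun _ _ => 1)
    (hcol : of (fun _ _ => 1) * N = k • of fun _ _ => 1) :
    N * (of (fun _ _ => 1) - Nᵀ) * of (fun _ _ => 1) =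
      (k * (Fintype.card n - k)) • of fun _ _ => 1 := by
  rw [Matrix.mul_assoc, Matrix.sub_mul, ones_mul_ones, transpose_mul_ones hcol, Matrix.mul_sub,
    Matrix.mul_smul, Matrix.mul_smul, hrow]
  module

theorem ones_mul_compl_transpose_mul (hrow : N * of (fun _ _ => 1) = k • of fun _ _ => 1)
    (hcol : of (fun _ _ => 1) * N = k • of fun _ _ => 1) :
    of (fun _ _ => 1) * (of (fun _ _ => 1) - Nᵀ) * N =
      (k * (Fintype.card n - k)) • of fun _ _ => 1 := by
  rw [Matrix.mul_sub, ones_mul_ones, ones_mul_transpose hrow, ← sub_smul, Matrix.smul_mul, hcol,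
    smul_smul, mul_comm]

theorem mul_compl_transpose_mul_self (hrow : N * of (fun _ _ => 1) = k • of fun _ _ => 1)
    (hcol : of (fun _ _ => 1) * N = k • of fun _ _ => 1)
    (hpg : N * Nᵀ * N = β • N + α • (of (fun _ _ => 1) - N)) :
    N * (of (fun _ _ => 1) - Nᵀ) * N = (k ^ 2 - α) • of (fun _ _ => 1) + (α - β) • N := by
  rw [Matrix.mul_sub, Matrix.sub_mul, hpg, hrow, Matrix.smul_mul, hcol]
  module

end PartialGeometricDesign

theorem sum_antiflag {ι κ R : Type*} [Fintype ι] [Fintype κ] [Ring R] [DecidableEq R]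
    {N : Matrix ι κ R} (h01 : ∀ p B, N p B = 0 ∨ N p B = 1) (f : ι × κ → R) :
    ∑ x : {pB : ι × κ // N pB.1 pB.2 = 0}, f x.1 = ∑ p, ∑ B, (1 - N p B) * f (p, B) := by
  rw [← Finset.sum_subtype _ (fun _ => Finset.mem_filter_univ _) f, Finset.sum_filter,
    Fintype.sum_prod_type]
  simp only [← ite_eq_zero_eq_one_sub (h01 _ _), ite_mul, one_mul, zero_mul]

section Antiflag

variable {ι κ R : Type*} [CommRing R] {N : Matrix ι κ R}

variable (N) in
def antiflagLift :
    Matrix ι κ R →ₗ[R]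
      Matrix {pB : ι × κ // N pB.1 pB.2 = 0} {pB : ι × κ // N pB.1 pB.2 = 0} R where
  toFun X := X.submatrix (fun x => x.1.1) (fun y => y.1.2)
  map_add' _ _ := rfl
  map_smul' _ _ := rfl

@[simp]
theorem antiflagLift_apply (X : Matrix ι κ R) (x y : {pB : ι × κ // N pB.1 pB.2 = 0}) :
    antiflagLift N X x y = X x.1.1 y.1.2 :=
  rfl

theorem antiflagLift_mul_antiflagLift [Fintype ι] [Fintype κ] [DecidableEq R]
    (h01 : ∀ p B, N p B = 0 ∨ N p B = 1) (X Y : Matrix ι κ R) :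
    antiflagLift N X * antiflagLift N Y =
      antiflagLift N (X * (of (fun _ _ => 1) - Nᵀ) * Y) := by
  ext x y
  simp only [antiflagLift_apply, mul_apply, Finset.sum_mul,
    sum_antiflag h01 fun pB => X x.1.1 pB.2 * Y pB.1 y.1.2, sub_apply, of_apply, transpose_apply]
  exact Finset.sum_congr rfl fun _ _ => Finset.sum_congr rfl fun _ _ => by ring

end Antiflag

end Matrix

/-- From a symmetric partial geometric design `(v,k;α,β)` with incidence matrix
`N`, the directed graph on antiflags `(p,B)` with `(p,B) → (q,C)` iff `p ∈ C`
is a directed strongly regular graph with parameters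
`(v(v−k), k(v−k), k²−α, k²−β, k²−α)`. -/
theorem antiflag_graph_dsrg (v : ℕ) (k α β : ℝ)
    (N : Matrix (Fin v) (Fin v) ℝ)
    (h01 : ∀ p B, N p B = 0 ∨ N p B = 1)
    (J : Matrix (Fin v) (Fin v) ℝ) (hJ : J = Matrix.of fun _ _ => (1 : ℝ))
    (hrow : N * J = k • J) (hcol : J * N = k • J)
    (hpg : N * Nᵀ * N = β • N + α • (J - N))
    (M : Matrix {pB : Fin v × Fin v // N pB.1 pB.2 = 0}
               {pB : Fin v × Fin v // N pB.1 pB.2 = 0} ℝ)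
    (hM : ∀ x y, M x y = if N x.1.1 y.1.2 = 1 then (1 : ℝ) else 0)
    (JA : Matrix {pB : Fin v × Fin v // N pB.1 pB.2 = 0}
                {pB : Fin v × Fin v // N pB.1 pB.2 = 0} ℝ)
    (hJA : JA = Matrix.of fun _ _ => (1 : ℝ)) :
    M * JA = (k * ((v : ℝ) - k)) • JA ∧ JA * M = (k * ((v : ℝ) - k)) • JA ∧
    M * M = (k ^ 2 - α) • (1 : Matrix _ _ ℝ) + (k ^ 2 - β) • M
      + (k ^ 2 - α) • (JA - 1 - M) := by
  subst hJ
  obtain rfl : M = antiflagLift N N :=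
    ext fun x y => (hM x y).trans (ite_eq_one_eq_self (h01 _ _))
  obtain rfl : JA = antiflagLift N (of fun _ _ => 1) := hJA
  refine ⟨?_, ?_, ?_⟩
  · rw [antiflagLift_mul_antiflagLift h01, mul_compl_transpose_mul_ones hrow hcol, map_smul,
      Fintype.card_fin]
  · rw [antiflagLift_mul_antiflagLift h01, ones_mul_compl_transpose_mul hrow hcol, map_smul,
      Fintype.card_fin]
  · rw [antiflagLift_mul_antiflagLift h01, mul_compl_transpose_mul_self hrow hcol hpg, map_add,
      map_smul, map_smul]
    module
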